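/- Fix real numbers α > 0, β > 0, and R > 0, and set γ_R = α·γ_D and γ_E = (α/β)·γ_D (so that γ_R = α·γ_D = β·γ_E). Then (i) lim_{γ_D → ∞} 𝒫₁(α·γ_D, γ_D, (α/β)·γ_D, R) = 𝒫₁^lim := 1 − 1/(1 + (α/β)·2^R), and (ii) lim_{γ_D → ∞} γ_D · (𝒫₁(α·γ_D, γ_D, (α/β)·γ_D, R) − 𝒫₁^lim) = 𝓜̂₁ := (2^R − 1)(1 + 1/α) / (1 + (α/β)·2^R). -/

import Mathlib

open Filter Real

/-- Case I closed-form secrecy outage probability. -/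
noncomputable def P1 (γR γD γE R : ℝ) : ℝ :=
  1 - Real.exp (-((2 : ℝ) ^ R - 1) / γR - ((2 : ℝ) ^ R - 1) / γD) *
    (1 + ((2 : ℝ) ^ R / γD) * γE)⁻¹

open Topology

/-!
Under the proportional scaling the gain factor `1 + (2^R/γ_D)·γ_E` is the constant
`K = 1 + (α/β)·2^R` and the exponent collapses to `-d/γ_D` with `d = (2^R - 1)(1 + 1/α)`.
Hence `γ_D·(𝒫₁ - (1 - K⁻¹))` is `-K⁻¹` times the difference quotient of `t ↦ exp (-d·t)` at `0`
with step `1/γ_D`, which tends to `d/K`; the limit (i) follows from this rate.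
-/

theorem HasDerivAt.tendsto_smul_sub_comp_inv_atTop {E : Type*} [NormedAddCommGroup E]
    [NormedSpace ℝ E] {f : ℝ → E} {f' : E} (hf : HasDerivAt f f' 0) :
    Tendsto (fun x : ℝ => x • (f x⁻¹ - f 0)) atTop (𝓝 f') := by
  have hinv : Tendsto (fun x : ℝ => x⁻¹) atTop (𝓝[≠] 0) :=
    tendsto_nhdsWithin_of_tendsto_nhds_of_eventually_within _ tendsto_inv_atTop_zero
      (by filter_upwards [eventually_ne_atTop 0] with x hx using inv_ne_zero hx)
  refine ((hasDerivAt_iff_tendsto_slope.mp hf).comp hinv).congr fun x => ?_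
  simp [slope_def_module]

theorem Filter.Tendsto.of_mul_sub_atTop {g : ℝ → ℝ} {L M : ℝ}
    (h : Tendsto (fun x => x * (g x - L)) atTop (𝓝 M)) : Tendsto g atTop (𝓝 L) := by
  have hlim := (tendsto_inv_atTop_zero.mul h).add_const L
  rw [zero_mul, zero_add] at hlim
  refine hlim.congr' ?_
  filter_upwards [eventually_ne_atTop 0] with x hx
  field_simp
  ring

theorem P1_proportional_eq (α β R : ℝ) {x : ℝ} (hx : x ≠ 0) :
    P1 (α * x) x ((α / β) * x) R =
      1 - exp (-(((2 : ℝ) ^ R - 1) * (1 + 1 / α)) * x⁻¹) * (1 + (α / β) * (2 : ℝ) ^ R)⁻¹ := by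
  have hgain : 1 + ((2 : ℝ) ^ R / x) * ((α / β) * x) = 1 + (α / β) * (2 : ℝ) ^ R := by
    field_simp
  have hexponent : -((2 : ℝ) ^ R - 1) / (α * x) - ((2 : ℝ) ^ R - 1) / x =
      -(((2 : ℝ) ^ R - 1) * (1 + 1 / α)) * x⁻¹ := by
    ring
  rw [P1, hgain, hexponent]

theorem case1_asymptotic_proportional (α β R : ℝ) :
    Tendsto (fun γD : ℝ => P1 (α * γD) γD ((α / β) * γD) R) atTop
      (nhds (1 - (1 + (α / β) * (2 : ℝ) ^ R)⁻¹)) ∧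
    Tendsto (fun γD : ℝ =>
        γD * (P1 (α * γD) γD ((α / β) * γD) R - (1 - (1 + (α / β) * (2 : ℝ) ^ R)⁻¹)))
      atTop
      (nhds (((2 : ℝ) ^ R - 1) * (1 + 1 / α) / (1 + (α / β) * (2 : ℝ) ^ R))) := by
  set d := ((2 : ℝ) ^ R - 1) * (1 + 1 / α)
  set K := 1 + (α / β) * (2 : ℝ) ^ R
  have hexp : HasDerivAt (fun t => exp (-d * t)) (-d) 0 := by
    simpa using ((hasDerivAt_id (0 : ℝ)).const_mul (-d)).exp
  have hslope : Tendsto (fun x : ℝ => K⁻¹ * -(x * (exp (-d * x⁻¹) - exp (-d * 0)))) atTop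
      (𝓝 (d / K)) := by
    simpa [div_eq_inv_mul] using (hexp.tendsto_smul_sub_comp_inv_atTop.neg.const_mul K⁻¹)
  have hrate : Tendsto (fun γD : ℝ =>
      γD * (P1 (α * γD) γD ((α / β) * γD) R - (1 - K⁻¹))) atTop (𝓝 (d / K)) := by
    refine hslope.congr' ?_
    filter_upwards [eventually_ne_atTop 0] with x hx
    rw [P1_proportional_eq α β R hx]
    simp only [mul_zero, exp_zero]
    ring
  exact ⟨hrate.of_mul_sub_atTop, hrate⟩
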